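/- arXiv:2303.12185 — 4 statements merged into one kernel-verified Lean document; each statement's English description precedes it below -/
import Mathlib

section
/- Let M be symmetric positive definite n×n, r ∈ ℝ^n, A an n×d full-rank matrix with A = Q₁R and Q₂ an orthonormal basis of the null space of Aᵀ, y ∈ ℝ^d, z₁* = (Rᵀ)⁻¹y, and r̃ = r - MQ₁z₁*. Define x_p = Q₂(Q₂ᵀMQ₂)⁻¹Q₂ᵀr̃ + Q₁z₁*. Then for any a in the null space of Aᵀ and b = x₀ - x_p with Aᵀx₀ = y, the curve x(t) = x_p + a sin(t) + b cos(t) satisfies ẍ + Q₂Q₂ᵀx = Q₂(Q₂ᵀMQ₂)⁻¹Q₂ᵀr̃ and Aᵀx(t) = y for all t. -/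
open Matrix

lemma combo1 {n : ℕ} (xp a b : Fin n → ℝ) (t : ℝ) :
    HasDerivAt (fun t => xp + Real.sin t • a + Real.cos t • b)
      (Real.cos t • a + (-Real.sin t) • b) t := by
  have h := (((hasDerivAt_const t xp).add ((Real.hasDerivAt_sin t).smul_const a)).add
    ((Real.hasDerivAt_cos t).smul_const b))
  exact h.congr_deriv (by simp)

lemma combo2 {n : ℕ} (a b : Fin n → ℝ) (t : ℝ) :
    HasDerivAt (fun t => Real.cos t • a + (-Real.sin t) • b)
      ((-Real.sin t) • a + (-Real.cos t) • b) t := by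
  exact ((Real.hasDerivAt_cos t).smul_const a).add
    (((Real.hasDerivAt_sin t).neg).smul_const b)

/-- Exact solution of the constrained Gaussian HMC dynamics on the affine subspace
`Aᵀx = y`: with `x_p = Q₂(Q₂ᵀMQ₂)⁻¹Q₂ᵀ r̃ + Q₁ z₁*`, the curve
`x(t) = x_p + a sin t + b cos t` satisfies `ẍ + Q₂Q₂ᵀ x = Q₂(Q₂ᵀMQ₂)⁻¹Q₂ᵀ r̃` and remains
on the constraint subspace for all time. -/
theorem stmt10 {n d : ℕ}
    (M : Matrix (Fin n) (Fin n) ℝ) (hMsym : M.IsSymm) (hMpd : M.PosDef)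
    (r : Fin n → ℝ)
    (A : Matrix (Fin n) (Fin d) ℝ) (hA : A.rank = d)
    (Q₁ : Matrix (Fin n) (Fin d) ℝ) (R : Matrix (Fin d) (Fin d) ℝ)
    (hQR : A = Q₁ * R) (hQ₁orth : Q₁ᵀ * Q₁ = 1) (hRinv : IsUnit R.det)
    (Q₂ : Matrix (Fin n) (Fin (n - d)) ℝ)
    (hQ₂orth : Q₂ᵀ * Q₂ = 1) (hnull : Aᵀ * Q₂ = 0)
    (hspan : ∀ v : Fin n → ℝ, Aᵀ *ᵥ v = 0 → Q₂ *ᵥ (Q₂ᵀ *ᵥ v) = v)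
    (y : Fin d → ℝ) (z₁star : Fin d → ℝ) (hz : z₁star = Rᵀ⁻¹ *ᵥ y)
    (rt : Fin n → ℝ) (hrt : rt = r - M *ᵥ (Q₁ *ᵥ z₁star))
    (xp : Fin n → ℝ)
    (hxp : xp = Q₂ *ᵥ ((Q₂ᵀ * M * Q₂)⁻¹ *ᵥ (Q₂ᵀ *ᵥ rt)) + Q₁ *ᵥ z₁star)
    (a : Fin n → ℝ) (ha : Aᵀ *ᵥ a = 0)
    (x₀ : Fin n → ℝ) (hx₀ : Aᵀ *ᵥ x₀ = y)
    (b : Fin n → ℝ) (hb : b = x₀ - xp)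
    (x : ℝ → (Fin n → ℝ))
    (hx : ∀ t, x t = xp + Real.sin t • a + Real.cos t • b) :
    (∀ t, deriv (deriv x) t + (Q₂ * Q₂ᵀ) *ᵥ x t
        = Q₂ *ᵥ ((Q₂ᵀ * M * Q₂)⁻¹ *ᵥ (Q₂ᵀ *ᵥ rt))) ∧
      (∀ t, Aᵀ *ᵥ x t = y) := by
  have hxf : x = fun t => xp + Real.sin t • a + Real.cos t • b := funext hx
  -- Aᵀ = Rᵀ * Q₁ᵀ
  have hAT : Aᵀ = Rᵀ * Q₁ᵀ := by rw [hQR, transpose_mul]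
  have hRTinv : IsUnit Rᵀ.det := by rwa [det_transpose]
  -- Aᵀ * Q₁ = Rᵀ
  have hAQ₁ : Aᵀ * Q₁ = Rᵀ := by
    rw [hAT, Matrix.mul_assoc, hQ₁orth, Matrix.mul_one]
  -- Aᵀ xp = y
  have hAxp : Aᵀ *ᵥ xp = y := by
    simp [hxp, mulVec_add, mulVec_mulVec, ← Matrix.mul_assoc, hnull, hAQ₁, hz,
      Matrix.mul_nonsing_inv _ hRTinv]
  have hAb : Aᵀ *ᵥ b = 0 := by
    rw [hb, mulVec_sub, hx₀, hAxp, sub_self]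
  have hQa := hspan a ha
  have hQb := hspan b hAb
  -- Q₁ᵀ * Q₂ = 0
  have hQ₁Q₂ : Q₁ᵀ * Q₂ = 0 := by
    have h := hnull
    rw [hAT, Matrix.mul_assoc] at h
    have := congrArg (fun B => Rᵀ⁻¹ * B) h
    simpa [← Matrix.mul_assoc, Matrix.nonsing_inv_mul _ hRTinv] using this
  have hQ₂Q₁ : Q₂ᵀ * Q₁ = 0 := by
    have := congrArg transpose hQ₁Q₂
    simpa [transpose_mul] using this
  -- Q₂ Q₂ᵀ xp = u
  set u := (Q₂ᵀ * M * Q₂)⁻¹ *ᵥ (Q₂ᵀ *ᵥ rt) with hu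
  have hQxp : Q₂ *ᵥ (Q₂ᵀ *ᵥ xp) = Q₂ *ᵥ u := by
    rw [hxp]
    simp [mulVec_add, mulVec_mulVec, hQ₂orth, hQ₂Q₁]
  have hderiv : deriv x = fun t => Real.cos t • a + (-Real.sin t) • b := by
    funext t
    rw [hxf]
    exact (combo1 xp a b t).deriv
  constructor
  · intro t
    rw [hderiv]
    have h2 : deriv (fun t => Real.cos t • a + (-Real.sin t) • b) t
        = (-Real.sin t) • a + (-Real.cos t) • b := (combo2 a b t).deriv
    rw [h2, hx t]
    have hmv : ∀ v : Fin n → ℝ, (Q₂ * Q₂ᵀ) *ᵥ v = Q₂ *ᵥ (Q₂ᵀ *ᵥ v) := fun v => by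
      rw [← mulVec_mulVec]
    rw [hmv]
    simp only [mulVec_add, mulVec_smul]
    rw [hQa, hQb, hQxp]
    module
  · intro t
    rw [hx t, mulVec_add, mulVec_add, mulVec_smul, mulVec_smul, hAxp, ha, hAb]
    simp
end

section
/- Suppose ℓ: ℝ^n → ℝ^d is defined by ℓ(x) = A₁ᵀx + y₁ when fᵀx + g ≥ 0 and ℓ(x) = A₂ᵀx + y₂ when fᵀx + g ≤ 0, and ℓ is well-defined (the two pieces agree on the hyperplane fᵀx + g = 0, assumed nonempty with f ≠ 0). Let Q₀ be any matrix whose columns form an orthonormal basis of the null space of [A₁ f]ᵀ. Then A₂ᵀQ₀ = 0. -/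
open Matrix

/-- Continuity of the piecewise affine map `ℓ` across the hyperplane `fᵀx + g = 0` forces
the null space of `[A₁ f]ᵀ` to lie in the null space of `A₂ᵀ`: if the columns of `Q₀` form
an orthonormal basis of the null space of `[A₁ f]ᵀ`, then `A₂ᵀ Q₀ = 0`. -/
theorem stmt11 {n d m : ℕ}
    (A₁ A₂ : Matrix (Fin n) (Fin d) ℝ) (y₁ y₂ : Fin d → ℝ)
    (f : Fin n → ℝ) (g : ℝ) (hf : f ≠ 0)
    (ℓ : (Fin n → ℝ) → (Fin d → ℝ))
    (hℓ₁ : ∀ x, f ⬝ᵥ x + g ≥ 0 → ℓ x = A₁ᵀ *ᵥ x + y₁)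
    (hℓ₂ : ∀ x, f ⬝ᵥ x + g ≤ 0 → ℓ x = A₂ᵀ *ᵥ x + y₂)
    (Q₀ : Matrix (Fin n) (Fin m) ℝ)
    (hQorth : Q₀ᵀ * Q₀ = 1)
    (hQnull₁ : A₁ᵀ * Q₀ = 0)
    (hQnullf : Q₀ᵀ *ᵥ f = 0)
    (hQspan : ∀ v : Fin n → ℝ, A₁ᵀ *ᵥ v = 0 → f ⬝ᵥ v = 0 →
      ∃ c : Fin m → ℝ, Q₀ *ᵥ c = v) :
    A₂ᵀ * Q₀ = 0 := by
  have hff : f ⬝ᵥ f ≠ 0 := by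
    intro h
    exact hf (by simpa [h] using (dotProduct_self_eq_zero (v := f)).mp h)
  set x₀ : Fin n → ℝ := (-(g / (f ⬝ᵥ f))) • f with hx₀
  have hx0 : f ⬝ᵥ x₀ + g = 0 := by
    simp [hx₀, dotProduct_smul, smul_eq_mul, div_mul_eq_mul_div, mul_comm]
    field_simp
    ring
  -- equality of the two pieces at any point on the hyperplane
  have key : ∀ x, f ⬝ᵥ x + g = 0 → A₁ᵀ *ᵥ x + y₁ = A₂ᵀ *ᵥ x + y₂ := by
    intro x hx
    have h1 := hℓ₁ x (by rw [hx])
    have h2 := hℓ₂ x (by rw [hx])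
    rw [← h1, ← h2]
  ext k j
  -- the j-th column of Q₀
  set v : Fin n → ℝ := fun i => Q₀ i j with hv
  have hfv : f ⬝ᵥ v = 0 := by
    have := congrFun hQnullf j
    simpa [mulVec, dotProduct, mul_comm] using this
  have hA1v : A₁ᵀ *ᵥ v = 0 := by
    ext i
    have := congrFun (congrFun hQnull₁ i) j
    simpa [Matrix.mul_apply, mulVec, dotProduct, hv] using this
  have hxv : f ⬝ᵥ (x₀ + v) + g = 0 := by
    rw [dotProduct_add, hfv]
    simpa using hx0
  have e1 := key x₀ hx0
  have e2 := key (x₀ + v) hxv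
  rw [mulVec_add, mulVec_add, hA1v] at e2
  have : A₂ᵀ *ᵥ v = 0 := by
    rw [add_zero, e1] at e2
    funext i
    have := congrFun e2 i
    simp only [Pi.add_apply, Pi.zero_apply] at this ⊢
    linarith
  have := congrFun this k
  simpa [mulVec, dotProduct, hv, Matrix.mul_apply] using this
end

section
/- Under the hypotheses: A₁, A₂ are n×d matrices of rank d, f ∈ ℝ^n is not in the column space of A₁ nor of A₂, and the piecewise affine map ℓ (equal to A₁ᵀx + y₁ on fᵀx + g ≥ 0 and A₂ᵀx + y₂ on fᵀx + g ≤ 0) is continuous. Then there exist a matrix U₀ with orthonormal columns and unit vectors u₁, u₂ such that for each i ∈ {1,2}: the columns of U₀ together with uᵢ form an orthonormal basis of the null space of Aᵢᵀ, and uᵢᵀU₀ = 0. -/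
open Matrix Module Submodule

noncomputable def stmt12.kerT {n d : ℕ} (A : Matrix (Fin n) (Fin d) ℝ) :
    Submodule ℝ (EuclideanSpace ℝ (Fin n)) :=
  LinearMap.ker ((Matrix.mulVecLin Aᵀ).comp (WithLp.linearEquiv 2 ℝ (Fin n → ℝ)).toLinearMap)

noncomputable def stmt12.ranT {n d : ℕ} (A : Matrix (Fin n) (Fin d) ℝ) :
    Submodule ℝ (EuclideanSpace ℝ (Fin n)) :=
  LinearMap.range ((WithLp.linearEquiv 2 ℝ (Fin n → ℝ)).symm.toLinearMap.comp (Matrix.mulVecLin A))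

lemma stmt12.mem_kerT {n d : ℕ} (A : Matrix (Fin n) (Fin d) ℝ) (v : EuclideanSpace ℝ (Fin n)) :
    v ∈ stmt12.kerT A ↔ Aᵀ *ᵥ v = 0 := Iff.rfl

lemma stmt12.mem_ranT {n d : ℕ} (A : Matrix (Fin n) (Fin d) ℝ) (v : EuclideanSpace ℝ (Fin n)) :
    v ∈ stmt12.ranT A ↔ ∃ c, A *ᵥ c = v := by
  constructor
  · rintro ⟨c, rfl⟩; exact ⟨c, rfl⟩
  · rintro ⟨c, hc⟩; exact ⟨c, by show WithLp.toLp 2 (A *ᵥ c) = v; rw [hc]⟩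

lemma stmt12.finrank_ranT {n d : ℕ} (A : Matrix (Fin n) (Fin d) ℝ) :
    Module.finrank ℝ (stmt12.ranT A) = A.rank := by
  rw [stmt12.ranT, LinearMap.range_comp, LinearEquiv.finrank_map_eq]; rfl


/-- Null-space decomposition: if `A₁, A₂` are full-rank `n×d`, `f` lies in neither column
space, and the piecewise affine map `ℓ` is continuous across `fᵀx + g = 0`, then the null
spaces of `A₁ᵀ` and `A₂ᵀ` share a common orthonormal basis `U₀` completed by single unit
vectors `u₁`, `u₂` respectively. -/
theorem stmt12 {n d : ℕ}
    (A₁ A₂ : Matrix (Fin n) (Fin d) ℝ) (y₁ y₂ : Fin d → ℝ)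
    (hA₁ : A₁.rank = d) (hA₂ : A₂.rank = d)
    (f : Fin n → ℝ) (g : ℝ)
    (hf₁ : ¬ ∃ c : Fin d → ℝ, A₁ *ᵥ c = f)
    (hf₂ : ¬ ∃ c : Fin d → ℝ, A₂ *ᵥ c = f)
    (ℓ : (Fin n → ℝ) → (Fin d → ℝ))
    (hℓ₁ : ∀ x, f ⬝ᵥ x + g ≥ 0 → ℓ x = A₁ᵀ *ᵥ x + y₁)
    (hℓ₂ : ∀ x, f ⬝ᵥ x + g ≤ 0 → ℓ x = A₂ᵀ *ᵥ x + y₂) :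
    ∃ (U₀ : Matrix (Fin n) (Fin (n - d - 1)) ℝ) (u₁ u₂ : Fin n → ℝ),
      U₀ᵀ * U₀ = 1 ∧ u₁ ⬝ᵥ u₁ = 1 ∧ u₂ ⬝ᵥ u₂ = 1 ∧
      U₀ᵀ *ᵥ u₁ = 0 ∧ U₀ᵀ *ᵥ u₂ = 0 ∧
      A₁ᵀ * U₀ = 0 ∧ A₂ᵀ * U₀ = 0 ∧
      A₁ᵀ *ᵥ u₁ = 0 ∧ A₂ᵀ *ᵥ u₂ = 0 ∧
      (∀ v : Fin n → ℝ, A₁ᵀ *ᵥ v = 0 →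
        ∃ (c : Fin (n - d - 1) → ℝ) (t : ℝ), U₀ *ᵥ c + t • u₁ = v) ∧
      (∀ v : Fin n → ℝ, A₂ᵀ *ᵥ v = 0 →
        ∃ (c : Fin (n - d - 1) → ℝ) (t : ℝ), U₀ *ᵥ c + t • u₂ = v) := by
  classical
  have hf0 : f ≠ 0 := fun h => hf₁ ⟨0, by simp [h]⟩
  have hff : f ⬝ᵥ f ≠ 0 := fun h => hf0 ((dotProduct_self_eq_zero (v := f)).mp h)
  -- inner product = dot product
  have hip : ∀ x y : EuclideanSpace ℝ (Fin n),
      (inner ℝ x y : ℝ) = dotProduct (α := ℝ) x y := fun x y => by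
    simp [PiLp.inner_apply, dotProduct, RCLike.inner_apply, mul_comm]
  -- Step 1: A₁ᵀ and A₂ᵀ agree on ker fᵀ
  have hkey : ∀ v : Fin n → ℝ, f ⬝ᵥ v = 0 → A₁ᵀ *ᵥ v = A₂ᵀ *ᵥ v := by
    intro v hv
    set x₀ : Fin n → ℝ := (-g / (f ⬝ᵥ f)) • f with hx₀
    have h0 : f ⬝ᵥ x₀ + g = 0 := by
      rw [hx₀, dotProduct_smul, smul_eq_mul, div_mul_cancel₀ _ hff]
      ring
    have h1 : f ⬝ᵥ (x₀ + v) + g = 0 := by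
      rw [dotProduct_add, hv, add_zero]; exact h0
    have e0 : A₁ᵀ *ᵥ x₀ + y₁ = A₂ᵀ *ᵥ x₀ + y₂ := by
      rw [← hℓ₁ x₀ (ge_of_eq h0), hℓ₂ x₀ (le_of_eq h0)]
    have e1 : A₁ᵀ *ᵥ (x₀ + v) + y₁ = A₂ᵀ *ᵥ (x₀ + v) + y₂ := by
      rw [← hℓ₁ _ (ge_of_eq h1), hℓ₂ _ (le_of_eq h1)]
    rw [mulVec_add, mulVec_add] at e1
    funext i
    have h2 := congrFun e0 i
    have h3 := congrFun e1 i
    simp only [Pi.add_apply] at h2 h3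
    linarith
  -- kernels as orthogonal complements of ranges
  have horth : ∀ A : Matrix (Fin n) (Fin d) ℝ, stmt12.kerT A = (stmt12.ranT A)ᗮ := by
    intro A
    ext v
    rw [stmt12.mem_kerT, Submodule.mem_orthogonal]
    have hdp : ∀ c : Fin d → ℝ, ∀ u : EuclideanSpace ℝ (Fin n), A *ᵥ c = u →
        (inner ℝ u v : ℝ) = (Aᵀ *ᵥ v) ⬝ᵥ c := by
      rintro c u hu
      rw [hip, ← hu]
      show (A *ᵥ c) ⬝ᵥ v = (Aᵀ *ᵥ v) ⬝ᵥ c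
      rw [dotProduct_comm, dotProduct_mulVec, mulVec_transpose]
    constructor
    · intro h u hu
      obtain ⟨c, hc⟩ := (stmt12.mem_ranT A u).mp hu
      rw [hdp c u hc, h, zero_dotProduct]
    · intro h
      have h2 := h (WithLp.toLp 2 (A *ᵥ (Aᵀ *ᵥ v))) ((stmt12.mem_ranT A _).mpr ⟨Aᵀ *ᵥ v, rfl⟩)
      rw [hdp (Aᵀ *ᵥ v) (WithLp.toLp 2 (A *ᵥ (Aᵀ *ᵥ v))) rfl] at h2
      exact dotProduct_self_eq_zero.mp h2
  have hker : ∀ A : Matrix (Fin n) (Fin d) ℝ, A.rank = d →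
      finrank ℝ (stmt12.kerT A) + d = n := by
    intro A hA
    have h := Submodule.finrank_add_finrank_orthogonal (K := stmt12.ranT A)
    rw [stmt12.finrank_ranT, hA, finrank_euclideanSpace_fin, ← horth A] at h
    omega
  -- f has nonzero pairing with some kernel element
  have hexists : ∀ A : Matrix (Fin n) (Fin d) ℝ, (¬ ∃ c : Fin d → ℝ, A *ᵥ c = f) →
      ∃ v : EuclideanSpace ℝ (Fin n), Aᵀ *ᵥ v = 0 ∧ f ⬝ᵥ v ≠ 0 := by
    intro A hfA
    by_contra h
    push_neg at h
    let fE : EuclideanSpace ℝ (Fin n) := WithLp.toLp 2 f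
    have hmem : fE ∈ (stmt12.kerT A)ᗮ := by
      rw [Submodule.mem_orthogonal]
      intro u hu
      rw [hip]
      show dotProduct (α := ℝ) u f = 0
      rw [dotProduct_comm]
      exact h u ((stmt12.mem_kerT A u).mp hu)
    rw [horth A, Submodule.orthogonal_orthogonal] at hmem
    obtain ⟨c, hc⟩ := (stmt12.mem_ranT A _).mp hmem
    exact hfA ⟨c, hc⟩
  -- the common subspace W
  set φ : EuclideanSpace ℝ (Fin n) →ₗ[ℝ] ℝ :=
    { toFun := fun v => f ⬝ᵥ v
      map_add' := fun a b => dotProduct_add f a b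
      map_smul' := fun c a => by
        show f ⬝ᵥ (c • a) = c • (f ⬝ᵥ a)
        rw [dotProduct_smul] } with hφdef
  set N₁ : Submodule ℝ (EuclideanSpace ℝ (Fin n)) := stmt12.kerT A₁ with hN₁def
  set W : Submodule ℝ (EuclideanSpace ℝ (Fin n)) := N₁ ⊓ LinearMap.ker φ with hWdef
  have hWmem₁ : ∀ v : EuclideanSpace ℝ (Fin n), v ∈ W ↔ (A₁ᵀ *ᵥ v = 0 ∧ f ⬝ᵥ v = 0) := by
    intro v
    rw [hWdef, Submodule.mem_inf, hN₁def, stmt12.mem_kerT, LinearMap.mem_ker]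
    exact Iff.rfl
  have hWmem₂ : ∀ v : EuclideanSpace ℝ (Fin n), v ∈ W ↔ (A₂ᵀ *ᵥ v = 0 ∧ f ⬝ᵥ v = 0) := by
    intro v
    rw [hWmem₁ v]
    constructor
    · rintro ⟨h1, h2⟩; exact ⟨(hkey v h2) ▸ h1, h2⟩
    · rintro ⟨h1, h2⟩; exact ⟨(hkey v h2).symm ▸ h1, h2⟩
  -- dimension of W
  have hd : d < n := by
    have hne : stmt12.ranT A₁ ≠ ⊤ := by
      intro h
      let fE : EuclideanSpace ℝ (Fin n) := WithLp.toLp 2 f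
      have : fE ∈ stmt12.ranT A₁ := by
        rw [h]; trivial
      obtain ⟨c, hc⟩ := (stmt12.mem_ranT A₁ _).mp this
      exact hf₁ ⟨c, hc⟩
    have := Submodule.finrank_lt hne
    rwa [stmt12.finrank_ranT, hA₁, finrank_euclideanSpace_fin] at this
  have hWrank : finrank ℝ W = n - d - 1 := by
    obtain ⟨v₁, hv₁A, hv₁f⟩ := hexists A₁ hf₁
    have hv₁N : v₁ ∈ N₁ := by rw [hN₁def, stmt12.mem_kerT]; exact hv₁A
    set ψ : Module.Dual ℝ N₁ := φ.comp N₁.subtype with hψdef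
    have hψ0 : ψ ≠ 0 := by
      intro h
      apply hv₁f
      have := congrFun (congrArg DFunLike.coe h) ⟨v₁, hv₁N⟩
      exact this
    have h1 := Module.Dual.finrank_ker_add_one_of_ne_zero hψ0
    have hmap : W = (LinearMap.ker ψ).map N₁.subtype := by
      ext v
      rw [Submodule.mem_map]
      constructor
      · intro hv
        have hv' := hv
        rw [hWdef, Submodule.mem_inf] at hv'
        exact ⟨⟨v, hv'.1⟩, hv'.2, rfl⟩
      · rintro ⟨⟨v, hv1⟩, hv2, rfl⟩
        rw [hWdef, Submodule.mem_inf]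
        exact ⟨hv1, hv2⟩
    have h2 : finrank ℝ W = finrank ℝ (LinearMap.ker ψ) := by
      rw [hmap, Submodule.finrank_map_subtype_eq]
    have h3 := hker A₁ hA₁
    rw [← hN₁def] at h3
    omega
  -- orthonormal basis of W
  let b : OrthonormalBasis (Fin (n - d - 1)) ℝ W :=
    (stdOrthonormalBasis ℝ W).reindex (finCongr hWrank)
  set U₀ : Matrix (Fin n) (Fin (n - d - 1)) ℝ :=
    Matrix.of fun i j => (b j : EuclideanSpace ℝ (Fin n)) i with hU₀def
  have hU₀col : ∀ j, (fun i => U₀ i j) = ((b j : EuclideanSpace ℝ (Fin n)) : Fin n → ℝ) := by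
    intro j; rfl
  -- main construction of the unit vectors
  have main : ∀ A : Matrix (Fin n) (Fin d) ℝ,
      (∀ v : EuclideanSpace ℝ (Fin n), v ∈ W ↔ (Aᵀ *ᵥ v = 0 ∧ f ⬝ᵥ v = 0)) →
      (∃ v : EuclideanSpace ℝ (Fin n), Aᵀ *ᵥ v = 0 ∧ f ⬝ᵥ v ≠ 0) →
      ∃ u : EuclideanSpace ℝ (Fin n), dotProduct (α := ℝ) u u = 1 ∧ u ∈ Wᗮ ∧
        Aᵀ *ᵥ u = 0 ∧
        ∀ v : EuclideanSpace ℝ (Fin n), Aᵀ *ᵥ v = 0 →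
          ∃ (w : W) (t : ℝ), (w : EuclideanSpace ℝ (Fin n)) + t • u = v := by
    rintro A hA ⟨v, hvA, hvf⟩
    set p : EuclideanSpace ℝ (Fin n) := ↑(orthogonalProjection W v) with hpdef
    have hpW : p ∈ W := (orthogonalProjection W v).2
    set r : EuclideanSpace ℝ (Fin n) := v - p with hrdef
    have hrW : r ∈ Wᗮ := sub_starProjection_mem_orthogonal v
    have hrA : Aᵀ *ᵥ r = 0 := by
      show Aᵀ *ᵥ (v - p) = 0
      rw [mulVec_sub, hvA, ((hA p).mp hpW).1, sub_zero]
    have hrf : f ⬝ᵥ r ≠ 0 := by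
      show f ⬝ᵥ (v - p) ≠ 0
      rw [dotProduct_sub, ((hA p).mp hpW).2, sub_zero]
      exact hvf
    have hr0 : r ≠ 0 := fun h => hrf (by rw [h]; simp)
    have hrn : ‖r‖ ≠ 0 := norm_ne_zero_iff.mpr hr0
    set u : EuclideanSpace ℝ (Fin n) := ‖r‖⁻¹ • r with hudef
    have huW : u ∈ Wᗮ := Submodule.smul_mem _ _ hrW
    have huA : Aᵀ *ᵥ u = 0 := by
      show Aᵀ *ᵥ (‖r‖⁻¹ • r) = 0
      rw [mulVec_smul, hrA, smul_zero]
    have huf : f ⬝ᵥ u ≠ 0 := by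
      show f ⬝ᵥ (‖r‖⁻¹ • r) ≠ 0
      rw [dotProduct_smul, smul_eq_mul]
      exact mul_ne_zero (inv_ne_zero hrn) hrf
    have hu1 : dotProduct (α := ℝ) u u = 1 := by
      rw [← hip, real_inner_self_eq_norm_sq, hudef, norm_smul]
      simp only [norm_inv, norm_norm]
      rw [inv_mul_cancel₀ hrn]
      norm_num
    refine ⟨u, hu1, huW, huA, ?_⟩
    intro w hw
    set q : EuclideanSpace ℝ (Fin n) := ↑(orthogonalProjection W w) with hqdef
    have hqW : q ∈ W := (orthogonalProjection W w).2
    set s : EuclideanSpace ℝ (Fin n) := w - q with hsdef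
    have hsW : s ∈ Wᗮ := sub_starProjection_mem_orthogonal w
    have hsA : Aᵀ *ᵥ s = 0 := by
      show Aᵀ *ᵥ (w - q) = 0
      rw [mulVec_sub, hw, ((hA q).mp hqW).1, sub_zero]
    set t : ℝ := (f ⬝ᵥ s) / (f ⬝ᵥ u) with htdef
    have hst : s - t • u ∈ W := by
      rw [hA]
      constructor
      · show Aᵀ *ᵥ (s - t • u) = 0
        rw [mulVec_sub, hsA, mulVec_smul, huA, smul_zero, sub_zero]
      · show f ⬝ᵥ (s - t • u) = 0
        rw [dotProduct_sub, dotProduct_smul, smul_eq_mul, htdef,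
          div_mul_cancel₀ _ huf, sub_self]
    have hst' : s - t • u ∈ Wᗮ := Submodule.sub_mem _ hsW (Submodule.smul_mem _ _ huW)
    have hzero : s - t • u = 0 :=
      (Submodule.disjoint_def.mp W.orthogonal_disjoint) _ hst hst'
    refine ⟨⟨q, hqW⟩, t, ?_⟩
    have hs : s = t • u := sub_eq_zero.mp hzero
    show q + t • u = w
    rw [← hs, hsdef]
    abel
  obtain ⟨u₁, hu₁dot, hu₁W, hu₁A, hu₁span⟩ := main A₁ hWmem₁ (hexists A₁ hf₁)
  obtain ⟨u₂, hu₂dot, hu₂W, hu₂A, hu₂span⟩ := main A₂ hWmem₂ (hexists A₂ hf₂)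
  -- representing elements of W via U₀
  have hUc : ∀ w : W, U₀ *ᵥ (fun j => b.repr w j)
      = ((w : EuclideanSpace ℝ (Fin n)) : Fin n → ℝ) := by
    intro w
    funext i
    conv_rhs => rw [← b.sum_repr w]
    show (fun j => U₀ i j) ⬝ᵥ (fun j => b.repr w j)
      = ((↑(∑ j, b.repr w j • b j) : EuclideanSpace ℝ (Fin n)) : Fin n → ℝ) i
    rw [Submodule.coe_sum]
    show ∑ j, U₀ i j * b.repr w j
      = (∑ j, ((b.repr w j • b j : W) : EuclideanSpace ℝ (Fin n))) i
    rw [WithLp.ofLp_sum, Finset.sum_apply]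
    refine Finset.sum_congr rfl ?_
    intro j _
    show U₀ i j * b.repr w j = (b.repr w j • (b j : EuclideanSpace ℝ (Fin n))) i
    show (b j : EuclideanSpace ℝ (Fin n)) i * b.repr w j
      = (b.repr w j • (b j : EuclideanSpace ℝ (Fin n))) i
    rw [WithLp.ofLp_smul, Pi.smul_apply, smul_eq_mul, mul_comm]
  -- finish
  refine ⟨U₀, u₁, u₂, ?_, hu₁dot, hu₂dot, ?_, ?_, ?_, ?_, hu₁A, hu₂A, ?_, ?_⟩
  · -- U₀ᵀ * U₀ = 1
    ext j k
    rw [Matrix.mul_apply, Matrix.one_apply]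
    have horm := orthonormal_iff_ite.mp b.orthonormal j k
    rw [Submodule.coe_inner, hip] at horm
    rw [← horm]
    show ∑ i, U₀ᵀ j i * U₀ i k
      = dotProduct (α := ℝ) (b j : EuclideanSpace ℝ (Fin n)) (b k)
    simp only [Matrix.transpose_apply]
    rfl
  · -- U₀ᵀ *ᵥ u₁ = 0
    funext j
    have h := (Submodule.mem_orthogonal W u₁).mp hu₁W _ (b j).2
    rw [hip] at h
    show (fun i => U₀ i j) ⬝ᵥ u₁ = 0
    rw [hU₀col j]
    exact h
  · funext j
    have h := (Submodule.mem_orthogonal W u₂).mp hu₂W _ (b j).2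
    rw [hip] at h
    show (fun i => U₀ i j) ⬝ᵥ u₂ = 0
    rw [hU₀col j]
    exact h
  · -- A₁ᵀ * U₀ = 0
    ext k j
    have h := ((hWmem₁ _).mp (b j).2).1
    have e : (A₁ᵀ * U₀) k j
        = (A₁ᵀ *ᵥ ((b j : EuclideanSpace ℝ (Fin n)) : Fin n → ℝ)) k := rfl
    rw [e, h]
    simp
  · ext k j
    have h := ((hWmem₂ _).mp (b j).2).1
    have e : (A₂ᵀ * U₀) k j
        = (A₂ᵀ *ᵥ ((b j : EuclideanSpace ℝ (Fin n)) : Fin n → ℝ)) k := rfl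
    rw [e, h]
    simp
  · intro v hv
    obtain ⟨w, t, hw⟩ := hu₁span (WithLp.toLp 2 v) hv
    exact ⟨fun j => b.repr w j, t, by rw [hUc w]; simpa using congrArg WithLp.ofLp hw⟩
  · intro v hv
    obtain ⟨w, t, hw⟩ := hu₂span (WithLp.toLp 2 v) hv
    exact ⟨fun j => b.repr w j, t, by rw [hUc w]; simpa using congrArg WithLp.ofLp hw⟩
end

section
/- Let u₁, u₂ be unit vectors, v ∈ ℝ^n with v in the span of -u₁ and vectors orthogonal to both u₁ and u₂ (i.e., v = -αu₁ + w with α > 0, w·u₁ = w·u₂ = 0), and ΔV ≤ 0 (potential decreases). Then the transmitted velocity v⁺ = (I - u₁u₁')v + u₂·sqrt((u₁·v)² - 2ΔV) satisfies ½‖v⁺‖² = ½‖v‖² - ΔV ≥ ½‖v‖²; i.e., a particle descending a potential step always crosses and gains kinetic energy equal to the drop. -/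
/-! Pythagoras, twice: `v` splits orthogonally into its tangential part `v - (u₁·v) u₁` and a
normal part of squared length `(u₁·v)²`; `v⁺` keeps the tangential part and replaces the normal
part by one of squared length `(u₁·v)² - 2ΔV`, which is nonnegative because `ΔV ≤ 0`. -/

open RealInnerProductSpace

section UnitVector

variable {E : Type*} [NormedAddCommGroup E] [InnerProductSpace ℝ E] {u : E}

lemma norm_add_smul_sq_of_inner_eq_zero (hu : ‖u‖ = 1) {w : E} (hw : ⟪w, u⟫ = 0) (c : ℝ) :
    ‖w + c • u‖ ^ 2 = ‖w‖ ^ 2 + c ^ 2 := by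
  rw [norm_add_sq_real, real_inner_smul_right, hw, norm_smul, Real.norm_eq_abs, hu,
    mul_one, sq_abs]
  ring

lemma inner_sub_inner_smul_self (hu : ‖u‖ = 1) (v : E) : ⟪v - ⟪u, v⟫ • u, u⟫ = 0 := by
  rw [inner_sub_left, real_inner_smul_left, inner_self_eq_one_of_norm_eq_one hu,
    real_inner_comm, mul_one, sub_self]

lemma norm_sq_eq_inner_sq_add_norm_sub_sq (hu : ‖u‖ = 1) (v : E) :
    ‖v‖ ^ 2 = ⟪u, v⟫ ^ 2 + ‖v - ⟪u, v⟫ • u‖ ^ 2 := by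
  conv_lhs => rw [← sub_add_cancel v (⟪u, v⟫ • u)]
  rw [norm_add_smul_sq_of_inner_eq_zero hu (inner_sub_inner_smul_self hu v), add_comm]

lemma sub_inner_smul_eq_of_eq_smul_add (hu : ‖u‖ = 1) {w v : E} {a : ℝ} (hw : ⟪w, u⟫ = 0)
    (hv : v = a • u + w) : v - ⟪u, v⟫ • u = w := by
  have hinner : ⟪u, v⟫ = a := by
    rw [hv, inner_add_right, real_inner_smul_right, inner_self_eq_one_of_norm_eq_one hu,
      real_inner_comm, hw, mul_one, add_zero]
  rw [hinner, hv, add_sub_cancel_left]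

end UnitVector

theorem norm_sq_transmitted_velocity {E : Type*} [NormedAddCommGroup E] [InnerProductSpace ℝ E]
    {u₁ u₂ v : E} {ΔV : ℝ} (hu₁ : ‖u₁‖ = 1) (hu₂ : ‖u₂‖ = 1)
    (htangent : ⟪v - ⟪u₁, v⟫ • u₁, u₂⟫ = 0) (hΔV : 2 * ΔV ≤ ⟪u₁, v⟫ ^ 2) :
    ‖(v - ⟪u₁, v⟫ • u₁) + √(⟪u₁, v⟫ ^ 2 - 2 * ΔV) • u₂‖ ^ 2 = ‖v‖ ^ 2 - 2 * ΔV := by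
  rw [norm_add_smul_sq_of_inner_eq_zero hu₂ htangent, Real.sq_sqrt (by linarith),
    norm_sq_eq_inner_sq_add_norm_sub_sq hu₁ v]
  ring

theorem stmt19_general {n : ℕ} (u₁ u₂ w : EuclideanSpace ℝ (Fin n)) (α ΔV : ℝ)
    (h₁ : ‖u₁‖ = 1) (h₂ : ‖u₂‖ = 1)
    (hw₁ : (inner ℝ w u₁ : ℝ) = 0) (hw₂ : (inner ℝ w u₂ : ℝ) = 0)
    (hΔV : ΔV ≤ 0)
    (v vplus : EuclideanSpace ℝ (Fin n))
    (hv : v = -(α • u₁) + w)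
    (hvplus : vplus = (v - (inner ℝ u₁ v : ℝ) • u₁)
      + Real.sqrt ((inner ℝ u₁ v : ℝ) ^ 2 - 2 * ΔV) • u₂) :
    (1/2) * ‖vplus‖ ^ 2 = (1/2) * ‖v‖ ^ 2 - ΔV ∧
      (1/2) * ‖v‖ ^ 2 - ΔV ≥ (1/2) * ‖v‖ ^ 2 := by
  have htangent : v - ⟪u₁, v⟫ • u₁ = w :=
    sub_inner_smul_eq_of_eq_smul_add h₁ hw₁ (by rw [hv, neg_smul])
  have henergy := norm_sq_transmitted_velocity (ΔV := ΔV) h₁ h₂ (htangent ▸ hw₂)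
    (by nlinarith [sq_nonneg ⟪u₁, v⟫])
  refine ⟨?_, by linarith⟩
  rw [hvplus, henergy]
  ring

/-- Descending a potential step (`ΔV ≤ 0`): a particle with incoming velocity `v = -α u₁ + w`
(`α > 0`, `w` tangential) always crosses, and the transmitted velocity
`v⁺ = (I - u₁u₁')v + sqrt((u₁·v)² - 2ΔV) u₂` gains kinetic energy equal to the drop:
`½‖v⁺‖² = ½‖v‖² - ΔV ≥ ½‖v‖²`. -/
theorem stmt19 {n : ℕ} (u₁ u₂ w : EuclideanSpace ℝ (Fin n)) (α ΔV : ℝ)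
    (h₁ : ‖u₁‖ = 1) (h₂ : ‖u₂‖ = 1) (hα : 0 < α)
    (hw₁ : (inner ℝ w u₁ : ℝ) = 0) (hw₂ : (inner ℝ w u₂ : ℝ) = 0)
    (hΔV : ΔV ≤ 0)
    (v vplus : EuclideanSpace ℝ (Fin n))
    (hv : v = -(α • u₁) + w)
    (hvplus : vplus = (v - (inner ℝ u₁ v : ℝ) • u₁)
      + Real.sqrt ((inner ℝ u₁ v : ℝ) ^ 2 - 2 * ΔV) • u₂) :
    (1/2) * ‖vplus‖ ^ 2 = (1/2) * ‖v‖ ^ 2 - ΔV ∧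
      (1/2) * ‖v‖ ^ 2 - ΔV ≥ (1/2) * ‖v‖ ^ 2 :=
  stmt19_general u₁ u₂ w α ΔV h₁ h₂ hw₁ hw₂ hΔV v vplus hv hvplus
end
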